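/- Let k be even, n ≥ k ≥ 6, and k/2 + 1 ≤ r ≤ k - 1, and write n - 1 = p(k-2) + q with 0 ≤ q ≤ k-3. Then g_r(n, (k-2)/2, k) ≤ f(n,k,r), i.e., ((k-2)/2)(n - (k+2)/2) + ex((k+2)/2, K_r) ≤ p·ex(k-1, K_r) + ex(q+1, K_r). -/

import Mathlib

open SimpleGraph

/-- `exK n r` is the Turán number ex(n, K_r): the maximum number of edges of an
`n`-vertex graph containing no copy of `K_r`. -/
noncomputable def exK (n r : ℕ) : ℕ :=
  sSup {m | ∃ G : SimpleGraph (Fin n), G.CliqueFree r ∧ G.edgeSet.ncard = m}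

/-- The "matching" graph: vertex `2a` joined to `2a+1` for `a < s`. -/
private def matchG (m s : ℕ) : SimpleGraph (Fin m) where
  Adj i j := i ≠ j ∧ i.val / 2 = j.val / 2 ∧ i.val / 2 < s
  symm := by constructor; rintro i j ⟨h1, h2, h3⟩; exact ⟨h1.symm, h2.symm, h2 ▸ h3⟩
  loopless := by constructor; rintro i ⟨h, _⟩; exact h rfl

private instance (m s : ℕ) : DecidableRel (matchG m s).Adj := fun i j =>
  inferInstanceAs (Decidable (i ≠ j ∧ i.val / 2 = j.val / 2 ∧ i.val / 2 < s))

private lemma two_mul_choose_two (m : ℕ) : 2 * m.choose 2 = m * (m - 1) := by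
  rw [Nat.choose_two_right]
  refine Nat.mul_div_cancel' ?_
  rcases Nat.even_or_odd m with h | h
  · exact (h.mul_right _).two_dvd
  · rcases m with - | m
    · simp
    · have : Even (m + 1 - 1) := by
        simpa using (Nat.Odd.sub_odd h odd_one)
      exact ((this).mul_left _).two_dvd

private lemma edge_ncard_le (m : ℕ) (G : SimpleGraph (Fin m)) :
    G.edgeSet.ncard ≤ m.choose 2 := by
  classical
  have h1 : G.edgeSet.ncard = G.edgeFinset.card := by
    simp [Set.ncard_eq_toFinset_card', edgeFinset]
  rw [h1]
  simpa using G.card_edgeFinset_le_card_choose_two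

private lemma exK_le (m r : ℕ) : exK m r ≤ m.choose 2 :=
  csSup_le' (by rintro a ⟨G, -, rfl⟩; exact edge_ncard_le m G)

private lemma exK_self_le (m : ℕ) (hm : 2 ≤ m) : exK m m + 1 ≤ m.choose 2 := by
  classical
  have hch : 1 ≤ m.choose 2 := by
    have := Nat.choose_le_choose 2 hm
    simpa using this
  have : exK m m ≤ m.choose 2 - 1 := by
    apply csSup_le'
    rintro a ⟨G, hfree, rfl⟩
    have h1 : G.edgeSet.ncard = G.edgeFinset.card := by
      simp [Set.ncard_eq_toFinset_card', edgeFinset]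
    rw [h1]
    by_contra hcon
    push_neg at hcon
    have hle : G.edgeFinset.card ≤ m.choose 2 := by
      simpa using G.card_edgeFinset_le_card_choose_two
    have hcardeq : ((⊤ : SimpleGraph (Fin m)).edgeFinset).card ≤ G.edgeFinset.card := by
      have : ((⊤ : SimpleGraph (Fin m)).edgeFinset).card = m.choose 2 := by
        simpa using (card_edgeFinset_top_eq_card_choose_two (V := Fin m))
      omega
    have hsub : G.edgeFinset ⊆ (⊤ : SimpleGraph (Fin m)).edgeFinset :=
      edgeFinset_mono le_top
    have hEq : G = ⊤ := by
      rw [← edgeFinset_inj]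
      exact Finset.eq_of_subset_of_card_le hsub hcardeq
    rw [hEq] at hfree
    exact (not_cliqueFree_of_top_embedding (G := (⊤ : SimpleGraph (Fin m)))
      (IsContained.refl _)) (by simpa using hfree)
  omega

private lemma matchG_card (m s : ℕ) (h2s : 2 * s ≤ m) :
    (matchG m s).edgeFinset.card = s := by
  have himg : (matchG m s).edgeFinset =
      (Finset.univ : Finset (Fin s)).image
        (fun a => s((⟨2 * a.val, by have := a.2; omega⟩ : Fin m),
                    (⟨2 * a.val + 1, by have := a.2; omega⟩ : Fin m))) := by
    ext e
    induction e using Sym2.ind with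
    | _ i j =>
      simp only [mem_edgeFinset, mem_edgeSet, Finset.mem_image, Finset.mem_univ, true_and]
      constructor
      · rintro ⟨hne, hdiv, hlt⟩
        refine ⟨⟨i.val / 2, hlt⟩, ?_⟩
        have hvne : i.val ≠ j.val := fun h => hne (Fin.ext h)
        have hcases : (i.val = 2 * (i.val / 2) ∧ j.val = 2 * (i.val / 2) + 1) ∨
            (j.val = 2 * (i.val / 2) ∧ i.val = 2 * (i.val / 2) + 1) := by omega
        rcases hcases with ⟨h1, h2⟩ | ⟨h1, h2⟩
        · rw [Sym2.eq_iff]; left; exact ⟨Fin.ext h1.symm, Fin.ext h2.symm⟩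
        · rw [Sym2.eq_iff]; right; exact ⟨Fin.ext h1.symm, Fin.ext h2.symm⟩
      · rintro ⟨a, ha⟩
        rw [Sym2.eq_iff] at ha
        have ha2 := a.2
        show i ≠ j ∧ i.val / 2 = j.val / 2 ∧ i.val / 2 < s
        rcases ha with ⟨h1, h2⟩ | ⟨h1, h2⟩
        · have hv1 := congrArg Fin.val h1
          have hv2 := congrArg Fin.val h2
          simp only [] at hv1 hv2
          refine ⟨fun h => ?_, by omega, by omega⟩
          have := congrArg Fin.val h
          omega
        · have hv1 := congrArg Fin.val h1
          have hv2 := congrArg Fin.val h2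
          simp only [] at hv1 hv2
          refine ⟨fun h => ?_, by omega, by omega⟩
          have := congrArg Fin.val h
          omega
  rw [himg, Finset.card_image_of_injective _ ?_, Finset.card_univ, Fintype.card_fin]
  intro a b hab
  rw [Sym2.eq_iff] at hab
  rcases hab with ⟨h1, -⟩ | ⟨h1, h2⟩
  · have := congrArg Fin.val h1
    simp only [] at this
    exact Fin.ext (by omega)
  · have hv1 := congrArg Fin.val h1
    have hv2 := congrArg Fin.val h2
    simp only [] at hv1 hv2
    exact Fin.ext (by omega)

private lemma matchG_compl_cliqueFree (m s r : ℕ) (h2s : 2 * s ≤ m)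
    (hrs : m - s < r) : ((matchG m s)ᶜ).CliqueFree r := by
  classical
  intro S hS
  set φ : Fin m → ℕ := fun i => if i.val < 2 * s then i.val / 2 else i.val - s with hφ
  have hinj : ∀ i ∈ S, ∀ j ∈ S, φ i = φ j → i = j := by
    intro i hi j hj hij
    by_contra hne
    have hadj := hS.1 (Finset.mem_coe.mpr hi) (Finset.mem_coe.mpr hj) hne
    rw [compl_adj] at hadj
    obtain ⟨-, hnadj⟩ := hadj
    have hnadj' : ¬(i.val / 2 = j.val / 2 ∧ i.val / 2 < s) := fun hc =>
      hnadj ⟨hne, hc.1, hc.2⟩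
    have hvne : i.val ≠ j.val := fun h => hne (Fin.ext h)
    simp only [hφ] at hij
    split_ifs at hij with hA hB hB
    · exact hnadj' ⟨hij, by omega⟩
    · omega
    · omega
    · have hi2 := i.isLt
      omega
  have hcard : S.card ≤ m - s := by
    have h1 : (S.image φ).card = S.card :=
      Finset.card_image_of_injOn (fun a ha b hb => hinj a ha b hb)
    have h2 : S.image φ ⊆ Finset.range (m - s) := by
      intro x hx
      simp only [Finset.mem_image] at hx
      obtain ⟨i, -, rfl⟩ := hx
      simp only [Finset.mem_range, hφ]
      have := i.isLt
      split_ifs <;> omega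
    have := Finset.card_le_card h2
    rw [h1] at this
    simpa using this
  have := hS.2
  omega

private lemma exK_ge (m r s : ℕ) (h2s : 2 * s ≤ m) (hrs : m - s < r) :
    m.choose 2 - s ≤ exK m r := by
  apply le_csSup
  · exact ⟨m.choose 2, by rintro a ⟨G, -, rfl⟩; exact edge_ncard_le m G⟩
  refine ⟨(matchG m s)ᶜ, matchG_compl_cliqueFree m s r h2s hrs, ?_⟩
  have h1 : ((matchG m s)ᶜ).edgeSet.ncard = ((matchG m s)ᶜ).edgeFinset.card := by
    simp [Set.ncard_eq_toFinset_card', edgeFinset]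
  rw [h1]
  have hcompl : (matchG m s)ᶜ = ⊤ \ matchG m s := by
    ext i j
    simp only [compl_adj, sdiff_adj, top_adj]
  have h2 : ((matchG m s)ᶜ).edgeFinset =
      (⊤ : SimpleGraph (Fin m)).edgeFinset \ (matchG m s).edgeFinset := by
    rw [← edgeFinset_sdiff]
    exact edgeFinset_inj.mpr hcompl
  rw [h2, Finset.card_sdiff_of_subset (edgeFinset_mono le_top), matchG_card m s h2s]
  congr 1
  simpa using (card_edgeFinset_top_eq_card_choose_two (V := Fin m))

private lemma core (t p q r B C D : ℤ) (ht : 3 ≤ t) (hp : 1 ≤ p)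
    (hq : q ≤ 2 * t - 3) (hq0 : 0 ≤ q)
    (hr1 : t + 1 ≤ r) (hr2 : r ≤ 2 * t - 1)
    (hB : 2 * B ≤ (t + 1) * t) (hB2 : r = t + 1 → 2 * B + 2 ≤ (t + 1) * t)
    (hC : (2 * t - 1) * (2 * t - 2) - 2 * (2 * t - r) ≤ 2 * C)
    (hDA : r ≤ q + 2 → (q + 1) * q - 2 * (q + 2 - r) ≤ 2 * D)
    (hDB : q + 2 ≤ r → (q + 1) * q ≤ 2 * D) :
    2 * ((t - 1) * (2 * p * (t - 1) + q - t)) + 2 * B ≤ 2 * (p * C) + 2 * D := by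
  have hpC : p * ((2 * t - 1) * (2 * t - 2) - 2 * (2 * t - r)) ≤ p * (2 * C) :=
    mul_le_mul_of_nonneg_left hC (by linarith)
  have h2pC : p * (2 * C) = 2 * (p * C) := by ring
  rw [← h2pC]
  rcases eq_or_lt_of_le hr1 with hre | hre
  · -- r = t + 1
    have hB' := hB2 hre.symm
    rcases le_or_gt t q with hcq | hcq
    · -- q ≥ t, so r = t+1 ≤ q + 2
      have hD := hDA (by omega)
      nlinarith [mul_nonneg (by omega : (0:ℤ) ≤ q - t) (by omega : (0:ℤ) ≤ q - t + 1)]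
    · -- q ≤ t - 1, so q + 2 ≤ t + 1 = r
      have hD := hDB (by omega)
      rcases le_or_gt q (t - 2) with hc2 | hc2
      · nlinarith [mul_nonneg (by omega : (0:ℤ) ≤ t - q - 1) (by omega : (0:ℤ) ≤ t - q - 2)]
      · -- q = t - 1
        have hqe : q = t - 1 := by omega
        subst hqe
        nlinarith []
  · -- r ≥ t + 2
    rcases le_or_gt (q + 2) r with hcase | hcase
    · have hD := hDB hcase
      have hps : 0 ≤ (p - 1) * (r - t - 1) :=
        mul_nonneg (by omega) (by omega)
      rcases le_or_gt (q + 2) t with hc2 | hc2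
      · nlinarith [mul_nonneg (by omega : (0:ℤ) ≤ t - q - 1) (by omega : (0:ℤ) ≤ t - q - 2)]
      · nlinarith [mul_nonneg (by omega : (0:ℤ) ≤ q - t + 1) (by omega : (0:ℤ) ≤ q - t + 2)]
    · have hD := hDA (by omega)
      have hps : 0 ≤ (p - 1) * (r - t - 1) :=
        mul_nonneg (by omega) (by omega)
      have hu : t + 1 ≤ q := by omega
      nlinarith [mul_nonneg (by omega : (0:ℤ) ≤ q - t - 1) (by omega : (0:ℤ) ≤ q - t + 2)]

set_option maxHeartbeats 1000000 in
theorem stmt_12 (n k r p q : ℕ) (hke : Even k) (hk : 6 ≤ k) (hkn : k ≤ n)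
    (hr1 : k / 2 + 1 ≤ r) (hr2 : r ≤ k - 1)
    (hd : n - 1 = p * (k - 2) + q) (hq : q ≤ k - 3) :
    (k - 2) / 2 * (n - (k + 2) / 2) + exK ((k + 2) / 2) r
      ≤ p * exK (k - 1) r + exK (q + 1) r := by
  obtain ⟨t, rfl⟩ : ∃ t, k = 2 * t := ⟨k / 2, by obtain ⟨c, hc⟩ := hke; omega⟩
  have ht : 3 ≤ t := by omega
  have hrt1 : t + 1 ≤ r := by omega
  have hrt2 : r ≤ 2 * t - 1 := by omega
  have hq' : q ≤ 2 * t - 3 := by omega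
  have e1 : (2 * t - 2) / 2 = t - 1 := by omega
  have e2 : (2 * t + 2) / 2 = t + 1 := by omega
  rw [e1, e2]
  -- p ≥ 1
  have hp : 1 ≤ p := by
    rcases Nat.eq_zero_or_pos p with hp0 | hp0
    · subst hp0; simp at hd; omega
    · exact hp0
  set B := exK (t + 1) r with hB
  set C := exK (2 * t - 1) r with hC
  set D := exK (q + 1) r with hD
  -- upper bound for B
  have hBle : 2 * B ≤ (t + 1) * t := by
    have h1 := exK_le (t + 1) r
    have h2 := two_mul_choose_two (t + 1)
    simp only [Nat.add_sub_cancel] at h2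
    omega
  have hBle2 : r = t + 1 → 2 * B + 2 ≤ (t + 1) * t := by
    intro hr
    subst hr
    have h1 := exK_self_le (t + 1) (by omega)
    have h2 := two_mul_choose_two (t + 1)
    simp only [Nat.add_sub_cancel] at h2
    omega
  -- lower bound for C
  have hCge : (2 * t - 1) * (2 * t - 2) - 2 * (2 * t - r) ≤ 2 * C := by
    have h := exK_ge (2 * t - 1) r (2 * t - r) (by omega) (by omega)
    have h2 := two_mul_choose_two (2 * t - 1)
    have h3 : 2 * t - 1 - 1 = 2 * t - 2 := by omega
    rw [h3] at h2
    omega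
  -- lower bound for D
  have hDge : (q + 1) * q - 2 * (q + 2 - r) ≤ 2 * D := by
    have h := exK_ge (q + 1) r (q + 2 - r) (by omega) (by omega)
    have h2 := two_mul_choose_two (q + 1)
    simp only [Nat.add_sub_cancel] at h2
    omega
  -- pass to ℤ
  have hXmul : 2 * (2 * t - r) ≤ (2 * t - 1) * (2 * t - 2) := by
    calc 2 * (2 * t - r) ≤ 2 * (2 * t - 2) := by omega
    _ ≤ (2 * t - 1) * (2 * t - 2) := Nat.mul_le_mul_right _ (by omega)
  have hCz : ((2:ℤ) * t - 1) * (2 * t - 2) - 2 * (2 * t - r) ≤ 2 * C := by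
    zify [hXmul, show r ≤ 2 * t by omega, show 1 ≤ 2 * t by omega,
      show 2 ≤ 2 * t by omega] at hCge
    linarith
  have hBz : 2 * (B:ℤ) ≤ ((t:ℤ) + 1) * t := by exact_mod_cast hBle
  have hBz2 : (r:ℤ) = (t:ℤ) + 1 → 2 * (B:ℤ) + 2 ≤ ((t:ℤ) + 1) * t := by
    intro h
    have hr' : r = t + 1 := by exact_mod_cast h
    exact_mod_cast hBle2 hr'
  have hDAz : (r:ℤ) ≤ (q:ℤ) + 2 → ((q:ℤ) + 1) * q - 2 * ((q:ℤ) + 2 - r) ≤ 2 * D := by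
    intro h
    have hr' : r ≤ q + 2 := by exact_mod_cast h
    have hqge : 2 ≤ q := by omega
    have hsub : 2 * (q + 2 - r) ≤ (q + 1) * q := by
      calc 2 * (q + 2 - r) ≤ 2 * q := by omega
      _ ≤ (q + 1) * q := Nat.mul_le_mul_right _ (by omega)
    have hDge' := hDge
    zify [hr', hsub] at hDge'
    linarith
  have hDBz : (q:ℤ) + 2 ≤ (r:ℤ) → ((q:ℤ) + 1) * q ≤ 2 * (D:ℤ) := by
    intro h
    have hr' : q + 2 ≤ r := by exact_mod_cast h
    have hDge' := hDge
    rw [show q + 2 - r = 0 by omega] at hDge'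
    simp only [Nat.mul_zero, Nat.sub_zero] at hDge'
    exact_mod_cast hDge'
  have hnz : (n:ℤ) - ((t:ℤ) + 1) = 2 * p * ((t:ℤ) - 1) + q - t := by
    set Y := p * (2 * t - 2) with hY
    have h1 : (n:ℤ) = (Y:ℤ) + q + 1 := by omega
    have h2 : (Y:ℤ) = (p:ℤ) * (2 * (t:ℤ) - 2) := by
      rw [hY]
      push_cast [show 2 ≤ 2 * t by omega]
      ring
    rw [h1, h2]
    ring
  have hcore := core t p q r B C D (by exact_mod_cast ht) (by exact_mod_cast hp)
    (by push_cast [show 3 ≤ 2 * t by omega]; exact_mod_cast (by omega : (q:ℤ) ≤ 2 * (t:ℤ) - 3))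
    (by positivity) (by exact_mod_cast hrt1) (by omega)
    hBz hBz2 hCz hDAz hDBz
  -- conclude
  zify [show t + 1 ≤ n by omega, show 1 ≤ t by omega]
  rw [hnz]
  linarith [hcore]
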